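/- arXiv:2508.12924 — 2 statements merged into one kernel-verified Lean document; each statement's English description precedes it below -/
import Mathlib

section
/- If s ∈ {0,1}ⁿ is primitive and has an even number of 1's, then Ξ(s) is primitive and ι(Ξ(s)) is not a cyclic shift of Ξ(s); equivalently, the orbit of Ξ(s) under cyclic shifts and inversion has exactly 2n elements. -/
open Finset

namespace Necklaces

variable {n : ℕ}

/-- The cyclic left shift `L` on binary strings of length `n`. -/
def shiftL (s : Fin n → Bool) : Fin n → Bool :=
  fun i => s ⟨(i.val + 1) % n, Nat.mod_lt _ (Nat.lt_of_le_of_lt (Nat.zero_le _) i.isLt)⟩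

/-- Digitwise inversion (complement) `ι`. -/
def inv (s : Fin n → Bool) : Fin n → Bool := fun i => !(s i)

/-- A string is primitive if no nontrivial cyclic shift fixes it. -/
def Primitive (s : Fin n → Bool) : Prop :=
  ∀ k : ℕ, 0 < k → k < n → shiftL^[k] s ≠ s

/-- The necklace `⟨s⟩`: the orbit of `s` under cyclic shifts. -/
def necklace (s : Fin n → Bool) : Set (Fin n → Bool) :=
  {t | ∃ k : ℕ, t = shiftL^[k] s}

/-- The necklace inversion class `[s]`: the orbit of `s` under cyclic shifts and inversion. -/
def invClass (s : Fin n → Bool) : Set (Fin n → Bool) :=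
  {t | ∃ k : ℕ, t = shiftL^[k] s ∨ t = inv (shiftL^[k] s)}

/-- The number of 1's in `s`. -/
def onesCard (s : Fin n → Bool) : ℕ := (univ.filter (fun i => s i = true)).card

/-- The mod-2 partial sum map `Ξ`: the `i`-th digit of `Ξ(s)` is `s₁+⋯+sᵢ (mod 2)`. -/
def xi (s : Fin n → Bool) : Fin n → Bool :=
  fun i => decide (Odd ((Finset.Iic i).filter (fun j => s j = true)).card)

/-- `ι(s)` is a cyclic shift of `s`. -/
def ReflexiveStr (s : Fin n → Bool) : Prop := ∃ k : ℕ, shiftL^[k] s = inv s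

/-- `s` consists of two copies of a primitive string of length `n/2`
with an odd number of 1's. -/
def TwoCopies (s : Fin n → Bool) : Prop :=
  n % 2 = 0 ∧ shiftL^[n / 2] s = s ∧ (∀ k : ℕ, 0 < k → k < n / 2 → shiftL^[k] s ≠ s) ∧
    Odd ((univ.filter (fun i : Fin n => i.val < n / 2 ∧ s i = true)).card)

/-- `s` generates a necklace belonging to `Ñ⁺(n)`. -/
def GoodPlus (s : Fin n → Bool) : Prop :=
  (Primitive s ∧ Even (onesCard s)) ∨ TwoCopies s

/-- The set `Ñ⁺(n)` of necklaces. -/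
def NtildePlus (n : ℕ) : Set (Set (Fin n → Bool)) :=
  {N | ∃ s : Fin n → Bool, GoodPlus s ∧ N = necklace s}

/-- The set `N̄(n)` of necklace inversion classes of primitive strings. -/
def Nbar (n : ℕ) : Set (Set (Fin n → Bool)) :=
  {C | ∃ s : Fin n → Bool, Primitive s ∧ C = invClass s}

/-- Lexicographic order on strings, with `0 < 1` and the leftmost digit most significant. -/
def strLt (s t : Fin n → Bool) : Prop :=
  ∃ i : Fin n, (∀ j : Fin n, j < i → s j = t j) ∧ s i < t i

/-- Extended lexicographic order on extended strings `s^b`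
(`b = false` encodes `−`, `b = true` encodes `+`). -/
def extLt (p q : (Fin n → Bool) × Bool) : Prop :=
  strLt p.1 q.1 ∨ (p.1 = q.1 ∧ p.2 < q.2)

/-- The twisted shift operator `F`. -/
def twistF (s : Fin n → Bool) : Fin n → Bool :=
  if h : 0 < n then
    (if shiftL s ⟨0, h⟩ = true then shiftL s else inv (shiftL s))
  else s

/-- The extended twisted shift operator `F̃`. -/
def extF (p : (Fin n → Bool) × Bool) : (Fin n → Bool) × Bool :=
  if h : 0 < n then
    (if twistF p.1 ⟨n - 1, Nat.sub_lt h Nat.one_pos⟩ = true then (twistF p.1, p.2)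
     else (twistF p.1, !p.2))
  else p

/-- Cyclic successor on `Fin n`. -/
def finSucc (i : Fin n) : Fin n :=
  ⟨(i.val + 1) % n, Nat.mod_lt _ (Nat.lt_of_le_of_lt (Nat.zero_le _) i.isLt)⟩

open scoped Classical in
/-- The (0-based) lexicographic rank of `μ i` among `μ₁,…,μₙ`:
the number of indices `j` with `μ j` strictly smaller than `μ i`. -/
noncomputable def rankOf {X : Type*} (lt : X → X → Prop) (μ : Fin n → X) (i : Fin n) : ℕ :=
  (univ.filter (fun j => lt (μ j) (μ i))).card

/-- `σ` is the cyclic permutation `(r₁ r₂ ⋯ rₙ)` built from the ranks `rᵢ` of `μᵢ`: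
`σ(rᵢ) = r_{i+1}` (indices mod `n`). -/
def BuiltFrom {X : Type*} (lt : X → X → Prop) (μ : Fin n → X) (σ : Equiv.Perm (Fin n)) : Prop :=
  ∀ i j : Fin n, rankOf lt μ i = j.val → (σ j).val = rankOf lt μ (finSucc i)

/-- `σ` consists of a single `n`-cycle. -/
def IsCyclicPerm (σ : Equiv.Perm (Fin n)) : Prop :=
  ∀ x y : Fin n, ∃ k : ℕ, (σ ^ k) x = y

/-- `σ` is unimodal: decreasing on an initial segment, then increasing. -/
def IsUnimodal (σ : Equiv.Perm (Fin n)) : Prop :=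
  ∃ m : Fin n, (∀ i j : Fin n, i ≤ j → j ≤ m → σ j ≤ σ i) ∧
    (∀ i j : Fin n, m ≤ i → i ≤ j → σ i ≤ σ j)

/-- Cyclic unimodal permutations. -/
def CUPperm (σ : Equiv.Perm (Fin n)) : Prop := IsCyclicPerm σ ∧ IsUnimodal σ

/-- The string `A(σ)` obtained from the itinerary of `σ` (`+ ↦ 0`, `− ↦ 1`),
with the last digit chosen so that the total number of 1's is even.
(Here `m = σ⁻¹ 0` is the unique element with `σ m` least.) -/
def Astr [NeZero n] (σ : Equiv.Perm (Fin n)) : Fin n → Bool :=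
  fun i =>
    if i.val + 1 < n then decide ((σ ^ (i.val + 1)) (σ⁻¹ 0) < σ⁻¹ 0)
    else decide (Odd ((univ.filter (fun j : Fin n =>
      j.val + 1 < n ∧ (σ ^ (j.val + 1)) (σ⁻¹ 0) < σ⁻¹ 0)).card))

/-- The string used for `Ψ(σ)`: itinerary digits with the last digit chosen
so that the total number of 1's is odd. -/
def BstrOdd [NeZero n] (σ : Equiv.Perm (Fin n)) : Fin n → Bool :=
  fun i =>
    if i.val + 1 < n then decide ((σ ^ (i.val + 1)) (σ⁻¹ 0) < σ⁻¹ 0)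
    else !(decide (Odd ((univ.filter (fun j : Fin n =>
      j.val + 1 < n ∧ (σ ^ (j.val + 1)) (σ⁻¹ 0) < σ⁻¹ 0)).card)))

/-- The itinerary of a cyclic unimodal permutation: `none` encodes `⋆` (position `n`),
`some true` encodes `−` (i.e. `σⁱ(m) < m`), `some false` encodes `+` (i.e. `σⁱ(m) > m`). -/
def itin [NeZero n] (σ : Equiv.Perm (Fin n)) : Fin n → Option Bool :=
  fun i =>
    if i.val + 1 = n then none
    else some (decide ((σ ^ (i.val + 1)) (σ⁻¹ 0) < σ⁻¹ 0))

/-- `σ` arises from the class `C` by the construction defining `λ`: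
for some representative `t` of `C` beginning with `1`, `σ` is the cyclic permutation
built from the lexicographic ranks of the iterates of `t` under `F` (non-reflexive case)
or of `t^−` under `F̃` (reflexive case). -/
def LamRel [NeZero n] (C : Set (Fin n → Bool)) (σ : Equiv.Perm (Fin n)) : Prop :=
  ∃ t : Fin n → Bool, t 0 = true ∧ C = invClass t ∧
    ((¬ ReflexiveStr t ∧ BuiltFrom strLt (fun i : Fin n => twistF^[i.val] t) σ) ∨
     (ReflexiveStr t ∧ BuiltFrom extLt (fun i : Fin n => extF^[i.val] (t, false)) σ))

/-- `σ` arises from the representative `s` by the Weiss–Rogers construction `Φ`: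
`σ` is the cyclic permutation built from the lexicographic ranks of
`νᵢ = ι(Ξ(L^{i-1}(s)))`. -/
def PhiBuilt (s : Fin n → Bool) (σ : Equiv.Perm (Fin n)) : Prop :=
  BuiltFrom strLt (fun i : Fin n => inv (xi (shiftL^[i.val] s))) σ

end Necklaces

/-!
Since `s` has an even number of 1's, `Ξ(s)` ends in `0`, so the cyclic difference
`t ↦ L t + t` sends `Ξ(s)` to `L s`. The cyclic difference commutes with `L` and does not see `ι`,
so a shift `L^k` fixing `Ξ(s)` up to inversion fixes `L s`; by primitivity of `s`, `n ∣ k`.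
But `L^k` with `n ∣ k` fixes `Ξ(s)` and so cannot invert it. Hence the `2n` strings
`L^k Ξ(s)`, `ι L^k Ξ(s)` with `k < n` are pairwise distinct.
-/

namespace Necklaces

open Function

variable {n : ℕ}

lemma shiftL_iterate_apply (k : ℕ) (t : Fin n → Bool) (i : Fin n) :
    shiftL^[k] t i = t ⟨(i + k) % n, Nat.mod_lt _ i.pos⟩ := by
  induction k generalizing t with
  | zero => simp [Nat.mod_eq_of_lt i.isLt]
  | succ k ih =>
    rw [iterate_succ_apply, ih]
    exact congrArg t (Fin.ext (by simp only [Nat.mod_add_mod, Nat.add_assoc]))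

lemma isPeriodicPt_shiftL (t : Fin n → Bool) : IsPeriodicPt shiftL n t := by
  funext i
  rw [shiftL_iterate_apply]
  exact congrArg t (Fin.ext (by simp [Nat.mod_eq_of_lt i.isLt]))

lemma shiftL_iterate_mul_sub_apply (hn : 0 < n) (k : ℕ) (t : Fin n → Bool) :
    shiftL^[n * k - k] (shiftL^[k] t) = t := by
  rw [← iterate_add_apply, Nat.sub_add_cancel (Nat.le_mul_of_pos_left k hn)]
  exact (isPeriodicPt_shiftL t).mul_const k

lemma commute_shiftL_inv : Function.Commute (shiftL (n := n)) inv := fun _ => rfl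

lemma inv_involutive : Involutive (inv (n := n)) := fun t => funext fun i => Bool.not_not (t i)

lemma inv_ne_self (hn : 0 < n) (t : Fin n → Bool) : inv t ≠ t :=
  fun h => Bool.not_ne_self (t ⟨0, hn⟩) (congrFun h _)

lemma Primitive.minimalPeriod_eq {t : Fin n → Bool} (hp : Primitive t) (hn : 0 < n) :
    minimalPeriod shiftL t = n := by
  have hle := (isPeriodicPt_shiftL t).minimalPeriod_le hn
  by_contra hne
  exact hp _ ((isPeriodicPt_shiftL t).minimalPeriod_pos hn) (lt_of_le_of_ne hle hne)
    (isPeriodicPt_minimalPeriod shiftL t)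

lemma necklace_eq_image_Iio (hn : 0 < n) (t : Fin n → Bool) :
    necklace t = (shiftL^[·] t) '' Set.Iio n := by
  ext u
  constructor
  · rintro ⟨k, rfl⟩
    exact ⟨k % n, Nat.mod_lt k hn, (isPeriodicPt_shiftL t).iterate_mod_apply k⟩
  · rintro ⟨k, -, rfl⟩
    exact ⟨k, rfl⟩

lemma Primitive.ncard_necklace {t : Fin n → Bool} (hp : Primitive t) (hn : 0 < n) :
    (necklace t).ncard = n := by
  rw [necklace_eq_image_Iio hn, Set.InjOn.ncard_image, Set.ncard_Iio_nat]
  simpa only [hp.minimalPeriod_eq hn] using iterate_injOn_Iio_minimalPeriod (f := shiftL) (x := t)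

lemma invClass_eq_union (t : Fin n → Bool) : invClass t = necklace t ∪ inv '' necklace t := by
  ext u
  simp only [invClass, necklace, Set.mem_union, Set.mem_image]
  constructor
  · rintro ⟨k, rfl | rfl⟩
    exacts [.inl ⟨k, rfl⟩, .inr ⟨_, ⟨k, rfl⟩, rfl⟩]
  · rintro (⟨k, rfl⟩ | ⟨_, ⟨k, rfl⟩, rfl⟩)
    exacts [⟨k, .inl rfl⟩, ⟨k, .inr rfl⟩]

lemma disjoint_necklace_image_inv (hn : 0 < n) {t : Fin n → Bool}
    (hr : ∀ k : ℕ, shiftL^[k] t ≠ inv t) : Disjoint (necklace t) (inv '' necklace t) := by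
  rw [Set.disjoint_left]
  rintro _ ⟨j, rfl⟩ ⟨_, ⟨k, rfl⟩, h⟩
  apply hr (n * k - k + j)
  rw [iterate_add_apply, ← h, ← (commute_shiftL_inv.iterate_left _).eq,
    shiftL_iterate_mul_sub_apply hn]

lemma ncard_invClass (hn : 0 < n) {t : Fin n → Bool} (hp : Primitive t)
    (hr : ∀ k : ℕ, shiftL^[k] t ≠ inv t) : (invClass t).ncard = 2 * n := by
  rw [invClass_eq_union, Set.ncard_union_eq (disjoint_necklace_image_inv hn hr),
    Set.ncard_image_of_injective _ inv_involutive.injective, hp.ncard_necklace hn, two_mul]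

def cyclicDiff (t : Fin n → Bool) : Fin n → Bool := fun i => xor (shiftL t i) (t i)

lemma commute_cyclicDiff_shiftL : Function.Commute (cyclicDiff (n := n)) shiftL := fun _ => rfl

lemma cyclicDiff_inv (t : Fin n → Bool) : cyclicDiff (inv t) = cyclicDiff t :=
  funext fun i => Bool.not_xor_not (shiftL t i) (t i)

lemma isPeriodicPt_cyclicDiff {k : ℕ} {u : Fin n → Bool}
    (h : shiftL^[k] u = u ∨ shiftL^[k] u = inv u) : IsPeriodicPt shiftL k (cyclicDiff u) := by
  change shiftL^[k] (cyclicDiff u) = cyclicDiff u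
  rw [← (commute_cyclicDiff_shiftL.iterate_right k).eq]
  rcases h with h | h <;> rw [h]
  exact cyclicDiff_inv u

section

variable {m : ℕ} (s : Fin (m + 1) → Bool)

lemma shiftL_apply_castSucc (i : Fin m) : shiftL s i.castSucc = s i.succ :=
  congrArg s (Fin.ext (Nat.mod_eq_of_lt (by simp)))

lemma shiftL_apply_last : shiftL s (Fin.last m) = s 0 :=
  congrArg s (Fin.ext (Nat.mod_self _))

lemma xi_zero : xi s 0 = s 0 := by
  have : Iic (0 : Fin (m + 1)) = {0} := by ext; simp
  cases h : s 0 <;> simp [xi, this, filter_singleton, h]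

lemma xi_succ (i : Fin m) : xi s i.succ = xor (xi s i.castSucc) (s i.succ) := by
  have : Iic i.succ = insert i.succ (Iic i.castSucc) := by
    ext j
    simp only [mem_Iic, Fin.le_def, Fin.val_succ, mem_insert, Fin.ext_iff, Fin.val_castSucc]
    omega
  cases h : s i.succ <;>
    simp [xi, this, filter_insert, h, Nat.odd_add_one, ← Nat.not_even_iff_odd]

lemma xi_last : xi s (Fin.last m) = decide (Odd (onesCard s)) := by
  have : Iic (Fin.last m) = univ := by ext; simp [Fin.le_last]
  unfold xi onesCard
  rw [this]

lemma cyclicDiff_xi (heven : Even (onesCard s)) : cyclicDiff (xi s) = shiftL s := by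
  funext i
  cases i using Fin.lastCases with
  | last => simp [cyclicDiff, shiftL_apply_last, xi_zero, xi_last, Nat.not_odd_iff_even.mpr heven]
  | cast i => simp [cyclicDiff, shiftL_apply_castSucc, xi_succ, Bool.xor_left_comm]

end

/-- If `s ∈ {0,1}ⁿ` is primitive and has an even number of 1's, then
`Ξ(s)` is primitive and `ι(Ξ(s))` is not a cyclic shift of `Ξ(s)`; equivalently, the orbit
of `Ξ(s)` under cyclic shifts and inversion has exactly `2n` elements. -/
theorem xi_of_primitive_even (n : ℕ) (hn : 0 < n) (s : Fin n → Bool)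
    (hprim : Primitive s) (heven : Even (onesCard s)) :
    Primitive (xi s) ∧ (∀ k : ℕ, shiftL^[k] (xi s) ≠ inv (xi s)) ∧
      (invClass (xi s)).ncard = 2 * n := by
  obtain ⟨m, rfl⟩ : ∃ m, n = m + 1 := ⟨n - 1, by omega⟩
  have hperiod : minimalPeriod shiftL (shiftL s) = m + 1 := by
    rw [minimalPeriod_apply (mk_mem_periodicPts hn (isPeriodicPt_shiftL s)),
      hprim.minimalPeriod_eq hn]
  have hdvd (k : ℕ) (hk : shiftL^[k] (xi s) = xi s ∨ shiftL^[k] (xi s) = inv (xi s)) :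
      m + 1 ∣ k := by
    rw [← hperiod, ← cyclicDiff_xi s heven]
    exact (isPeriodicPt_cyclicDiff hk).minimalPeriod_dvd
  have hprim' : Primitive (xi s) := fun k hk hkn h =>
    Nat.not_dvd_of_pos_of_lt hk hkn (hdvd k (.inl h))
  have hrefl (k : ℕ) : shiftL^[k] (xi s) ≠ inv (xi s) := fun h =>
    inv_ne_self hn (xi s) (h.symm.trans ((isPeriodicPt_shiftL (xi s)).trans_dvd (hdvd k (.inr h))))
  exact ⟨hprim', hrefl, ncard_invClass hn hprim' hrefl⟩

end Necklaces
end

section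
/- A cyclic unimodal permutation of {1,…,n} is uniquely determined by its itinerary: if σ₁ and σ₂ are cyclic unimodal permutations of {1,…,n} with Itin(σ₁) = Itin(σ₂), then σ₁ = σ₂. -/
open Finset

/-!
Let `m = σ⁻¹ 0` be the valley of a cyclic unimodal permutation `σ` and `pₖ = σᵏ(m)` its orbit.
The itinerary records on which side of `m` each `pₖ` lies. Two orbit points on opposite sides of
`m` are compared by their sides; two on the same side compare as their images do, reversed on
the decreasing branch. Iterating until one of them reaches `m`, the itinerary determines the
relative order of all `pₖ`. Since the orbit exhausts `{1,…,n}`, an order-preserving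
correspondence between the orbits of two such permutations is the identity, so the orbits agree
pointwise, and with them the permutations.
-/

open Function Set

section Valley

variable {α β : Type*} [LinearOrder α] [LinearOrder β]

def IsValley (f : α → α) (a : α) : Prop :=
  StrictAntiOn f (Iic a) ∧ StrictMonoOn f (Ici a)

lemma IsValley.compare_apply_of_lt {f : α → α} {a u v : α} (hf : IsValley f a)
    (hu : u < a) (hv : v < a) : compare (f u) (f v) = compare v u :=
  (compare_iff _ _).2 <| (hf.1.compares hu.le hv.le).2 <| (compare_iff _ _).1 rfl

lemma IsValley.compare_apply_of_gt {f : α → α} {a u v : α} (hf : IsValley f a)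
    (hu : a < u) (hv : a < v) : compare (f u) (f v) = compare u v :=
  (compare_iff _ _).2 <| (hf.2.compares hu.le hv.le).2 <| (compare_iff _ _).1 rfl

lemma compare_eq_compare_of_eq_pivot {u u' a : α} {v v' b : β} (hu : u = a) (hv : v = b)
    (h : compare u' a = compare v' b) : compare u u' = compare v v' := by
  subst hu hv
  rw [Std.OrientedOrd.eq_swap, h, ← Std.OrientedOrd.eq_swap]

lemma compare_eq_compare_of_ne_of_lt_iff {u a : α} {v b : β} (hu : u ≠ a) (hv : v ≠ b)
    (h : u < a ↔ v < b) : compare u a = compare v b := by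
  rcases hu.lt_or_gt with hua | hua
  · rw [compare_lt_iff_lt.2 hua, compare_lt_iff_lt.2 (h.1 hua)]
  · rw [compare_gt_iff_gt.2 hua,
      compare_gt_iff_gt.2 (hv.lt_or_gt.resolve_left (h.not.1 hua.not_gt))]

/-- `v` lies weakly on the other side of `a` from `u`. -/
lemma compare_eq_compare_pivot_of_ne {u v a : α} (hu : u ≠ a) (h : compare v a ≠ compare u a) :
    compare u v = compare u a := by
  rcases hu.lt_or_gt with hua | hua
  · have hav : a ≤ v := not_lt.1 fun hva =>
      h (by rw [compare_lt_iff_lt.2 hva, compare_lt_iff_lt.2 hua])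
    rw [compare_lt_iff_lt.2 hua, compare_lt_iff_lt.2 (hua.trans_le hav)]
  · have hva : v ≤ a := not_lt.1 fun hav =>
      h (by rw [compare_gt_iff_gt.2 hav, compare_gt_iff_gt.2 hua])
    rw [compare_gt_iff_gt.2 hua, compare_gt_iff_gt.2 (hva.trans_lt hua)]

variable {f : α → α} {g : β → β} {a : α} {b : β} {p : ℕ → α} {q : ℕ → β}

lemma compare_orbit_eq_of_apply_add_eq (hf : IsValley f a) (hg : IsValley g b)
    (hp : ∀ k, p (k + 1) = f (p k)) (hq : ∀ k, q (k + 1) = g (q k))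
    (hside : ∀ k, compare (p k) a = compare (q k) b) (d : ℕ) :
    ∀ i, p (i + d) = a → ∀ j, compare (p i) (p j) = compare (q i) (q j) := by
  have hpivot : ∀ i, p i = a → ∀ j, compare (p i) (p j) = compare (q i) (q j) := fun i hi j =>
    compare_eq_compare_of_eq_pivot hi (compare_eq_iff_eq.1 ((hside i).symm.trans
      (compare_eq_iff_eq.2 hi))) (hside j)
  induction d with
  | zero => exact hpivot
  | succ d ih =>
    intro i hi j
    have hnext := ih (i + 1) (by rwa [add_right_comm]) (j + 1)
    by_cases hpi : p i = a
    · exact hpivot i hpi j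
    have hqi : q i ≠ b := fun h =>
      hpi (compare_eq_iff_eq.1 ((hside i).trans (compare_eq_iff_eq.2 h)))
    by_cases hsame : compare (p j) a = compare (p i) a
    · rcases Ne.lt_or_gt hpi with hia | hia
      · have hja : p j < a := compare_lt_iff_lt.1 (hsame.trans (compare_lt_iff_lt.2 hia))
        have hib : q i < b := compare_lt_iff_lt.1 ((hside i).symm.trans (compare_lt_iff_lt.2 hia))
        have hjb : q j < b := compare_lt_iff_lt.1 ((hside j).symm.trans (compare_lt_iff_lt.2 hja))
        rw [← hf.compare_apply_of_lt hja hia, ← hp, ← hp, Std.OrientedOrd.eq_swap, hnext,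
          hq, hq, hg.compare_apply_of_lt hib hjb, ← Std.OrientedOrd.eq_swap]
      · have hja : a < p j := compare_gt_iff_gt.1 (hsame.trans (compare_gt_iff_gt.2 hia))
        have hib : b < q i := compare_gt_iff_gt.1 ((hside i).symm.trans (compare_gt_iff_gt.2 hia))
        have hjb : b < q j := compare_gt_iff_gt.1 ((hside j).symm.trans (compare_gt_iff_gt.2 hja))
        rw [← hf.compare_apply_of_gt hia hja, ← hp, ← hp, hnext, hq, hq,
          hg.compare_apply_of_gt hib hjb]
    · rw [compare_eq_compare_pivot_of_ne hpi hsame, hside i,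
        compare_eq_compare_pivot_of_ne (v := q j) hqi (by rwa [← hside j, ← hside i])]

lemma compare_orbit_eq (hf : IsValley f a) (hg : IsValley g b)
    (hp : ∀ k, p (k + 1) = f (p k)) (hq : ∀ k, q (k + 1) = g (q k))
    (hside : ∀ k, compare (p k) a = compare (q k) b) (hret : ∀ i, ∃ d, p (i + d) = a)
    (i j : ℕ) : compare (p i) (p j) = compare (q i) (q j) :=
  let ⟨d, hd⟩ := hret i
  compare_orbit_eq_of_apply_add_eq hf hg hp hq hside d i hd j

end Valley

lemma eq_of_compare_eq {ι α : Type*} [LinearOrder α] [WellFoundedLT α] {u v : ι → α}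
    (hu : Surjective u) (hv : Surjective v) (h : ∀ i j, compare (u i) (u j) = compare (v i) (v j)) :
    u = v := by
  set φ : α → α := v ∘ surjInv hu
  have hφu : ∀ i, φ (u i) = v i := fun i => compare_eq_iff_eq.1 <|
    (h _ i).symm.trans (compare_eq_iff_eq.2 (surjInv_eq hu (u i)))
  have hmono : StrictMono φ := fun x y hxy => by
    rw [← surjInv_eq hu x, ← surjInv_eq hu y] at hxy
    exact compare_lt_iff_lt.1 ((h _ _).symm.trans (compare_lt_iff_lt.2 hxy))
  have hsurj : Surjective φ := fun c =>
    let ⟨i, hi⟩ := hv c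
    ⟨u i, (hφu i).trans hi⟩
  have hid : φ = id :=
    congrArg DFunLike.coe (Subsingleton.elim (hmono.orderIsoOfSurjective φ hsurj) (OrderIso.refl α))
  funext i
  rw [← hφu, hid, id]

lemma minimalPeriod_eq_natCard {α : Type*} [Finite α] {σ : Equiv.Perm α} {x : α}
    (h : ∀ y, ∃ k : ℕ, (σ ^ k) x = y) : minimalPeriod σ x = Nat.card α := by
  have horbit : MulAction.orbit (Subgroup.zpowers σ) x = univ := eq_univ_of_forall fun y =>
    let ⟨k, hk⟩ := h y
    ⟨⟨σ ^ k, Subgroup.npow_mem_zpowers σ k⟩, hk⟩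
  have := Nat.card_congr (MulAction.orbitZPowersEquiv σ x)
  rwa [Nat.card_zmod, horbit, Nat.card_univ, eq_comm] at this

lemma Equiv.Perm.eq_of_pow_apply_eq {α : Type*} {σ₁ σ₂ : Equiv.Perm α} {x y : α}
    (hx : ∀ z, ∃ k : ℕ, (σ₁ ^ k) x = z) (h : ∀ k : ℕ, (σ₁ ^ k) x = (σ₂ ^ k) y) : σ₁ = σ₂ := by
  ext z
  obtain ⟨k, rfl⟩ := hx z
  have hsucc := h (k + 1)
  rwa [pow_succ', pow_succ', Equiv.Perm.mul_apply, Equiv.Perm.mul_apply, ← h k] at hsucc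

namespace Necklaces

section CyclicUnimodal

variable {n : ℕ} {σ : Equiv.Perm (Fin n)}

lemma IsCyclicPerm.minimalPeriod_eq (hσ : IsCyclicPerm σ) (x : Fin n) :
    minimalPeriod σ x = n := by
  rw [minimalPeriod_eq_natCard (hσ x), Nat.card_eq_fintype_card, Fintype.card_fin]

lemma IsCyclicPerm.pow_mod_apply (hσ : IsCyclicPerm σ) (k : ℕ) (x : Fin n) :
    (σ ^ (k % n)) x = (σ ^ k) x := by
  have h := iterate_mod_minimalPeriod_eq (f := σ) (x := x) (n := k)
  rwa [hσ.minimalPeriod_eq, ← Equiv.Perm.coe_pow, ← Equiv.Perm.coe_pow] at h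

lemma IsCyclicPerm.pow_apply_eq_self_iff (hσ : IsCyclicPerm σ) (k : ℕ) (x : Fin n) :
    (σ ^ k) x = x ↔ n ∣ k := by
  have h := isPeriodicPt_iff_minimalPeriod_dvd (f := σ) (x := x) (n := k)
  rwa [hσ.minimalPeriod_eq, IsPeriodicPt, IsFixedPt, ← Equiv.Perm.coe_pow] at h

variable [NeZero n]

lemma IsUnimodal.isValley (h : IsUnimodal σ) : IsValley σ (σ⁻¹ 0) := by
  obtain ⟨m, hdec, hinc⟩ := h
  have hm : σ m = 0 := le_antisymm (by
    rcases le_total (σ⁻¹ 0) m with hle | hle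
    · simpa using hdec _ _ hle le_rfl
    · simpa using hinc _ _ le_rfl hle) (Fin.zero_le _)
  rw [Equiv.Perm.inv_eq_iff_eq.2 hm.symm]
  exact ⟨AntitoneOn.strictAntiOn_of_injOn (fun i _ j hj hij => hdec i j hij hj) σ.injective.injOn,
    MonotoneOn.strictMonoOn_of_injOn (fun i hi j _ hij => hinc i j hi hij) σ.injective.injOn⟩

lemma compare_pow_apply_eq_of_itin_eq {σ₁ σ₂ : Equiv.Perm (Fin n)} (h₁ : IsCyclicPerm σ₁)
    (h₂ : IsCyclicPerm σ₂) (h : itin σ₁ = itin σ₂) (k : ℕ) :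
    compare ((σ₁ ^ k) (σ₁⁻¹ 0)) (σ₁⁻¹ 0) = compare ((σ₂ ^ k) (σ₂⁻¹ 0)) (σ₂⁻¹ 0) := by
  rw [← h₁.pow_mod_apply, ← h₂.pow_mod_apply]
  have hlt : k % n < n := Nat.mod_lt k (Nat.pos_of_neZero n)
  obtain hk | hk := Nat.eq_zero_or_pos (k % n)
  · simp only [hk, pow_zero, Equiv.Perm.one_apply, compare_eq_iff_eq.2 rfl]
  have hndvd : ¬ n ∣ k % n := fun hdvd => (Nat.eq_zero_of_dvd_of_lt hdvd hlt).not_gt hk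
  have hdigit := congrFun h ⟨k % n - 1, by omega⟩
  simp only [itin, Nat.sub_add_cancel hk, hlt.ne, if_false, Option.some_inj,
    decide_eq_decide] at hdigit
  exact compare_eq_compare_of_ne_of_lt_iff
    (mt (h₁.pow_apply_eq_self_iff _ _).1 hndvd) (mt (h₂.pow_apply_eq_self_iff _ _).1 hndvd) hdigit

end CyclicUnimodal

/-- A cyclic unimodal permutation of `{1,…,n}` is uniquely determined by
its itinerary. -/
theorem itinerary_determines_CUP (n : ℕ) [NeZero n] (σ₁ σ₂ : Equiv.Perm (Fin n))
    (h₁ : CUPperm σ₁) (h₂ : CUPperm σ₂) (h : itin σ₁ = itin σ₂) : σ₁ = σ₂ := by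
  have hstep : ∀ (σ : Equiv.Perm (Fin n)) (k : ℕ),
      (σ ^ (k + 1)) (σ⁻¹ 0) = σ ((σ ^ k) (σ⁻¹ 0)) := fun σ k => by
    rw [pow_succ', Equiv.Perm.mul_apply]
  have hreturn : ∀ i, ∃ d, (σ₁ ^ (i + d)) (σ₁⁻¹ 0) = σ₁⁻¹ 0 := fun i =>
    ⟨n * i - i, (h₁.1.pow_apply_eq_self_iff _ _).2 <| by
      rw [Nat.add_sub_cancel' (Nat.le_mul_of_pos_left i (Nat.pos_of_neZero n))]
      exact dvd_mul_right n i⟩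
  have horbit : (fun k : ℕ => (σ₁ ^ k) (σ₁⁻¹ 0)) = fun k => (σ₂ ^ k) (σ₂⁻¹ 0) :=
    eq_of_compare_eq (h₁.1 _) (h₂.1 _) <|
      compare_orbit_eq h₁.2.isValley h₂.2.isValley (hstep σ₁) (hstep σ₂)
        (compare_pow_apply_eq_of_itin_eq h₁.1 h₂.1 h) hreturn
  exact Equiv.Perm.eq_of_pow_apply_eq (h₁.1 _) (congrFun horbit)

end Necklaces
end
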